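/- For every k with 1 ≤ k ≤ n, the following identity (relation R_k^−) holds in F_q[x_1,…,x_n,y_1,…,y_n]: Σ_{i=0}^{k−1} Σ_{j=0}^{n−k} (−1)^{i+j+n+1} c_{k−1,i} · (c*_{n−k,j})^q · u_{i−j−1}^{q^{min(i,j+1)}} = f_k · (f*_{n+1−k})^q. -/

import Mathlib

open MvPolynomial

variable (F : Type) [Field F] [Fintype F] (n : ℕ)

/-- `fX F n k` is the orbit product `f_k` (1-indexed, meaningful for `1 ≤ k ≤ n`). -/
noncomputable def fX (k : ℕ) : MvPolynomial (Fin n ⊕ Fin n) F :=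
  if h : 1 ≤ k ∧ k ≤ n then
    ∏ α : Fin (k - 1) → F,
      (X (Sum.inl ⟨k - 1, by omega⟩) +
        ∑ j : Fin (k - 1), C (α j) * X (Sum.inl ⟨j.val, by omega⟩))
  else 0

/-- `fY F n k` is `f_k^*` (1-indexed), the orbit product of `y_{n+1-k}`. -/
noncomputable def fY (k : ℕ) : MvPolynomial (Fin n ⊕ Fin n) F :=
  if h : 1 ≤ k ∧ k ≤ n then
    ∏ α : Fin (k - 1) → F,
      (X (Sum.inr ⟨n - k, by omega⟩) +
        ∑ j : Fin (k - 1), C (α j) * X (Sum.inr ⟨n - 1 - j.val, by omega⟩))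
  else 0

/-- `uInv F n j` is the invariant `u_j`, for `j : ℤ`. -/
noncomputable def uInv (j : ℤ) : MvPolynomial (Fin n ⊕ Fin n) F :=
  if 0 ≤ j then ∑ k : Fin n, X (Sum.inl k) ^ (Fintype.card F) ^ j.toNat * X (Sum.inr k)
  else ∑ k : Fin n, X (Sum.inl k) * X (Sum.inr k) ^ (Fintype.card F) ^ (-j).toNat

/-- `cX F n s t` is the Dickson-type invariant `c_{s,t}` (in the `x`-variables):
the sum over strictly increasing sequences `1 ≤ j_1 < ⋯ < j_{s-t} ≤ s` (encoded as
strictly monotone functions `Fin (s-t) → Fin s`) of `∏_l f_{j_l}^{(q-1)·q^{t+l-j_l}}`. -/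
noncomputable def cX (s t : ℕ) : MvPolynomial (Fin n ⊕ Fin n) F :=
  if s ≤ n then
    ∑ g ∈ Finset.univ.filter (fun g : Fin (s - t) → Fin s => ∀ a b : Fin (s - t), a < b → g a < g b),
      ∏ l : Fin (s - t),
        fX F n ((g l).val + 1) ^ ((Fintype.card F - 1) * (Fintype.card F) ^ (t + l.val - (g l).val))
  else 0

/-- `cY F n s t` is `c_{s,t}^*` (in the `y`-variables). -/
noncomputable def cY (s t : ℕ) : MvPolynomial (Fin n ⊕ Fin n) F :=
  if s ≤ n then
    ∑ g ∈ Finset.univ.filter (fun g : Fin (s - t) → Fin s => ∀ a b : Fin (s - t), a < b → g a < g b),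
      ∏ l : Fin (s - t),
        fY F n ((g l).val + 1) ^ ((Fintype.card F - 1) * (Fintype.card F) ^ (t + l.val - (g l).val))
  else 0

/-!
Write `P_s(z) = ∏ (z + a)` over the `F`-span of `v_0, …, v_{s-1}`, so that
`f_{s+1} = P_s(v_s)`. Splitting off the last coordinate gives
`P_{s+1}(z) = ∏_{β ∈ F} (P_s(z) + β f_{s+1}) = P_s(z)^q - f_{s+1}^{q-1} P_s(z)`,
and by induction `P_s(z) = ∑_t (-1)^{s+t} c_{s,t} z^{q^t}`, the recursion
`c_{s+1,t+1} = c_{s,t}^q + c_{s,t+1} f_{s+1}^{q-1}` being the split of the increasing sequences by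
whether they end at `s + 1`.

Expanding both factors, the left side of `R_k^-` is `∑_m P_{k-1}(x_m) · P*_{n-k}(y_m)^q`. For
`m < k` the point `x_m` lies in the span of `x_1, …, x_{k-1}`, and for `m > k` the point `y_m`
lies in the span of `y_n, …, y_{k+1}`, so only `m = k` survives, giving `f_k · (f*_{n+1-k})^q`.
-/

open Finset

namespace FiniteField

variable {K : Type*} [Field K] [Fintype K]

local notation "q" => Fintype.card K

theorem prod_X_sub_C_eq_X_pow_card_sub_X :
    ∏ a : K, (Polynomial.X - Polynomial.C a)
      = (Polynomial.X ^ q - Polynomial.X : Polynomial K) := by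
  set p : Polynomial K := Polynomial.X ^ q - Polynomial.X
  have hmonic : p.Monic :=
    Polynomial.monic_X_pow_sub (by rw [Polynomial.degree_X]; exact_mod_cast Fintype.one_lt_card)
  have hcard : Multiset.card p.roots = p.natDegree := by
    rw [roots_X_pow_card_sub_X, X_pow_card_sub_X_natDegree_eq K Fintype.one_lt_card]
    rfl
  rw [← Polynomial.prod_multiset_X_sub_C_of_monic_of_roots_card_eq hmonic hcard,
    roots_X_pow_card_sub_X]
  rfl

theorem prod_add_smul_eq_of_field {L : Type*} [Field L] [Algebra K L] (T c : L) :
    ∏ β : K, (T + β • c) = T ^ q - c ^ (q - 1) * T := by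
  rcases eq_or_ne c 0 with rfl | hc
  · simp [zero_pow (Nat.sub_ne_zero_of_lt Fintype.one_lt_card)]
  have hroots : ∏ β : K, (T / c - algebraMap K L β) = (T / c) ^ q - T / c := by
    simpa using congrArg (Polynomial.aeval (T / c)) (prod_X_sub_C_eq_X_pow_card_sub_X (K := K))
  calc ∏ β : K, (T + β • c) = ∏ β : K, c * (T / c - algebraMap K L (-β)) := by
        refine prod_congr rfl fun β _ => ?_
        rw [Algebra.smul_def, map_neg]
        field_simp
        ring
    _ = c ^ q * ((T / c) ^ q - T / c) := by
        rw [prod_mul_distrib, prod_const, card_univ, ← hroots]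
        congr 1
        exact Fintype.prod_equiv (Equiv.neg K) _ _ fun β => rfl
    _ = T ^ q - c ^ (q - 1) * T := by
        have hcq : c ^ q = c ^ (q - 1) * c := by
          rw [← pow_succ, Nat.sub_add_cancel Fintype.card_pos]
        rw [mul_sub, ← mul_pow, mul_div_cancel₀ _ hc, hcq, mul_assoc, mul_div_cancel₀ _ hc]

/-- Proved for the generic pair `X 0, X 1` inside the fraction field of `K[X 0, X 1]`, then
specialised. -/
theorem prod_add_smul_eq {R : Type*} [CommRing R] [Algebra K R] (T c : R) :
    ∏ β : K, (T + β • c) = T ^ q - c ^ (q - 1) * T := by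
  have huniv : ∏ β : K, (X 0 + β • X 1 : MvPolynomial (Fin 2) K)
      = X 0 ^ q - X 1 ^ (q - 1) * X 0 := by
    let φ := IsScalarTower.toAlgHom K (MvPolynomial (Fin 2) K)
      (FractionRing (MvPolynomial (Fin 2) K))
    have hinj : Function.Injective φ := IsFractionRing.injective _ _
    apply hinj
    simpa only [map_prod, map_add, map_smul, map_sub, map_mul, map_pow]
      using prod_add_smul_eq_of_field (φ (X 0)) (φ (X 1))
  simpa using congrArg (aeval ![T, c]) huniv

theorem frobeniusAlgHom_pow_apply {R : Type*} [CommRing R] [Algebra K R] (t : ℕ) (x : R) :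
    (frobeniusAlgHom K R ^ t) x = x ^ q ^ t := by
  rw [AlgHom.coe_pow, coe_frobeniusAlgHom, pow_iterate]

end FiniteField

theorem Fin.le_val_apply_of_strictMono {a b : ℕ} {g : Fin a → Fin b} (hg : StrictMono g)
    (l : Fin a) : (l : ℕ) ≤ g l := by
  obtain ⟨l, hl⟩ := l
  induction l with
  | zero => exact Nat.zero_le _
  | succ i ih =>
    exact (ih (by omega)).trans_lt
      (hg (show (⟨i, by omega⟩ : Fin a) < ⟨i + 1, hl⟩ from i.lt_succ_self))

theorem Fin.val_apply_add_le_of_strictMono {a b : ℕ} {g : Fin a → Fin b} (hg : StrictMono g)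
    (l : Fin a) : (g l : ℕ) + a ≤ b + l := by
  have := Fin.le_val_apply_of_strictMono
    (Fin.rev_strictAnti.comp (hg.comp_strictAnti Fin.rev_strictAnti)) l.rev
  simp only [Function.comp_apply, Fin.rev_rev, Fin.val_rev] at this
  omega

section OrbitProd

variable (K : Type*) [Field K] [Fintype K] {R : Type*} [CommRing R] [Algebra K R]

local notation "q" => Fintype.card K

/-- The paper's `f_{s+1}` is `orbitProd K v s (v s)`. -/
noncomputable def orbitProd (v : ℕ → R) (s : ℕ) (z : R) : R :=
  ∏ α : Fin s → K, (z + ∑ j : Fin s, α j • v j)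

/-- With `r = s - t` this is `c_{s,t}`; keeping the length `r` as a separate argument avoids casts
between `Fin (s + 1 - t)` and `Fin (s - t + 1)`. -/
noncomputable def dicksonSum (v : ℕ → R) (r s t : ℕ) : R :=
  ∑ g ∈ univ.filter (fun g : Fin r → Fin s => StrictMono g),
    ∏ l : Fin r, orbitProd K v (g l) (v (g l)) ^ ((q - 1) * q ^ (t + l - g l))

noncomputable def dicksonCoeff (v : ℕ → R) (s t : ℕ) : R :=
  dicksonSum K v (s - t) s t

noncomputable def dicksonPoly (v : ℕ → R) (s : ℕ) (z : R) : R :=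
  ∑ t ∈ range (s + 1), (-1) ^ (s + t) * dicksonCoeff K v s t * z ^ q ^ t

variable {K} (v : ℕ → R)

@[simp]
theorem orbitProd_zero (z : R) : orbitProd K v 0 z = z := by
  simp [orbitProd]

theorem orbitProd_succ (s : ℕ) (z : R) :
    orbitProd K v (s + 1) z = ∏ β : K, orbitProd K v s (z + β • v s) := by
  rw [orbitProd, ← (Fin.snocEquiv fun _ => K).prod_comp, Fintype.prod_prod_type]
  refine prod_congr rfl fun β _ => prod_congr rfl fun α _ => ?_
  simp [Fin.sum_univ_castSucc, Fin.snocEquiv, add_assoc, add_comm]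

theorem orbitProd_apply_of_lt {s m : ℕ} (hm : m < s) : orbitProd K v s (v m) = 0 := by
  refine prod_eq_zero (mem_univ (-Pi.single ⟨m, hm⟩ 1)) ?_
  simp [Pi.single_apply, ite_smul]

theorem dicksonSum_eq_zero_of_lt {r s : ℕ} (h : s < r) (t : ℕ) : dicksonSum K v r s t = 0 := by
  refine sum_eq_zero fun g hg => absurd (Fintype.card_le_of_injective g ?_) (by simpa using h)
  exact (mem_filter.mp hg).2.injective

theorem dicksonSum_succ (r s t : ℕ) :
    dicksonSum K v (r + 1) (s + 1) t = dicksonSum K v (r + 1) s t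
      + dicksonSum K v r s t * orbitProd K v s (v s) ^ ((q - 1) * q ^ (t + r - s)) := by
  rw [dicksonSum, ← sum_filter_not_add_sum_filter _ (fun g => g (Fin.last r) = Fin.last s),
    filter_filter, filter_filter, dicksonSum, dicksonSum, sum_mul]
  congr 1
  · have hne {g : Fin (r + 1) → Fin (s + 1)} (hg : g ∈ univ.filter
        fun g => StrictMono g ∧ ¬g (Fin.last r) = Fin.last s) (l : Fin (r + 1)) :
        g l ≠ Fin.last s := by
      rw [mem_filter] at hg
      exact fun hl => hg.2.2 (Fin.last_le_iff.mp (hl ▸ hg.2.1.monotone (Fin.le_last l)))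
    refine sum_bij' (fun g hg l => (g l).castPred (hne hg l)) (fun g _ => Fin.castSucc ∘ g)
      (fun g hg => ?_) (fun g hg => ?_) (fun g _ => by ext; simp) (fun g _ => by ext; simp)
      (fun g _ => by simp)
    · simpa using Fin.strictMono_castPred_comp (hne hg) (mem_filter.mp hg).2.1
    · simpa using Fin.strictMono_castSucc.comp (mem_filter.mp hg).2
  · have hne {g : Fin (r + 1) → Fin (s + 1)} (hg : g ∈ univ.filter
        fun g => StrictMono g ∧ g (Fin.last r) = Fin.last s) (l : Fin r) :
        g l.castSucc ≠ Fin.last s := by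
      rw [mem_filter] at hg
      exact (hg.2.2 ▸ hg.2.1 (Fin.castSucc_lt_last l)).ne
    refine sum_bij' (fun g hg l => (g l.castSucc).castPred (hne hg l))
      (fun g _ => Fin.snoc (α := fun _ => Fin (s + 1)) (Fin.castSucc ∘ g) (Fin.last s))
      (fun g hg => ?_) (fun g hg => ?_) (fun g hg => ?_) (fun g _ => by ext; simp)
      (fun g hg => ?_)
    · simpa using Fin.strictMono_castPred_comp (hne hg)
        ((mem_filter.mp hg).2.1.comp Fin.strictMono_castSucc)
    · rw [mem_filter] at hg ⊢
      refine ⟨mem_univ _, ?_, by simp⟩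
      rw [← Fin.insertNth_last', Fin.strictMono_insertNth_iff]
      exact ⟨Fin.strictMono_castSucc.comp hg.2, fun i _ => Fin.castSucc_lt_last _,
        fun i hi => absurd hi (Fin.castSucc_lt_last i).not_ge⟩
    · rw [mem_filter] at hg
      ext l
      cases l using Fin.lastCases <;> simp [hg.2.2]
    · rw [mem_filter] at hg
      simp [Fin.prod_univ_castSucc, hg.2.2]

theorem dicksonSum_succ_right {r s : ℕ} (t : ℕ) (h : s ≤ t + r) :
    dicksonSum K v r s (t + 1) = dicksonSum K v r s t ^ q := by
  rw [dicksonSum, dicksonSum, ← FiniteField.frobeniusAlgHom_apply, map_sum]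
  refine sum_congr rfl fun g hg => ?_
  rw [map_prod]
  refine prod_congr rfl fun l _ => ?_
  have := Fin.val_apply_add_le_of_strictMono (mem_filter.mp hg).2 l
  rw [FiniteField.frobeniusAlgHom_apply, ← pow_mul,
    show t + 1 + l - g l = t + l - g l + 1 by omega, pow_succ, mul_assoc]

@[simp]
theorem dicksonCoeff_self (s : ℕ) : dicksonCoeff K v s s = 1 := by
  rw [dicksonCoeff, Nat.sub_self]
  simp [dicksonSum, Subsingleton.strictMono]

theorem dicksonCoeff_succ_zero (s : ℕ) :
    dicksonCoeff K v (s + 1) 0 = dicksonCoeff K v s 0 * orbitProd K v s (v s) ^ (q - 1) := by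
  simp [dicksonCoeff, dicksonSum_succ, dicksonSum_eq_zero_of_lt v s.lt_succ_self]

theorem dicksonCoeff_succ_succ {s t : ℕ} (h : t < s) :
    dicksonCoeff K v (s + 1) (t + 1)
      = dicksonCoeff K v s t ^ q
        + dicksonCoeff K v s (t + 1) * orbitProd K v s (v s) ^ (q - 1) := by
  obtain ⟨r, hr⟩ : ∃ r, s - t = r + 1 := ⟨s - t - 1, by omega⟩
  rw [dicksonCoeff, dicksonCoeff, dicksonCoeff, Nat.add_sub_add_right, hr, dicksonSum_succ,
    dicksonSum_succ_right v t (by omega), show s - (t + 1) = r by omega,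
    show t + 1 + r - s = 0 by omega, pow_zero, mul_one]

theorem dicksonPoly_pow_card (s : ℕ) (z : R) :
    dicksonPoly K v s z ^ q
      = ∑ t ∈ range (s + 1), (-1) ^ (s + t) * dicksonCoeff K v s t ^ q * z ^ q ^ (t + 1) := by
  rw [dicksonPoly, ← FiniteField.frobeniusAlgHom_apply, map_sum]
  refine sum_congr rfl fun t _ => ?_
  rw [map_mul, map_mul, map_pow, map_neg, map_one, FiniteField.frobeniusAlgHom_apply,
    FiniteField.frobeniusAlgHom_apply, ← pow_mul, ← pow_succ]

theorem dicksonPoly_add_smul (s : ℕ) (z w : R) (β : K) :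
    dicksonPoly K v s (z + β • w) = dicksonPoly K v s z + β • dicksonPoly K v s w := by
  simp only [dicksonPoly, smul_sum, ← sum_add_distrib]
  refine sum_congr rfl fun t _ => ?_
  rw [← FiniteField.frobeniusAlgHom_pow_apply, map_add, map_smul,
    FiniteField.frobeniusAlgHom_pow_apply, FiniteField.frobeniusAlgHom_pow_apply, mul_add,
    mul_smul_comm]

theorem dicksonPoly_succ (s : ℕ) (z : R) :
    dicksonPoly K v (s + 1) z
      = dicksonPoly K v s z ^ q - orbitProd K v s (v s) ^ (q - 1) * dicksonPoly K v s z := by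
  rw [dicksonPoly_pow_card, dicksonPoly, dicksonPoly, mul_sum]
  conv_lhs => rw [sum_range_succ', sum_range_succ]
  conv_rhs => rw [sum_range_succ, sum_range_succ']
  have hmiddle : ∑ t ∈ range s,
        (-1) ^ (s + 1 + (t + 1)) * dicksonCoeff K v (s + 1) (t + 1) * z ^ q ^ (t + 1)
      = ∑ t ∈ range s, (-1) ^ (s + t) * dicksonCoeff K v s t ^ q * z ^ q ^ (t + 1)
        - ∑ t ∈ range s, orbitProd K v s (v s) ^ (q - 1)
          * ((-1) ^ (s + (t + 1)) * dicksonCoeff K v s (t + 1) * z ^ q ^ (t + 1)) := by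
    rw [← sum_sub_distrib]
    refine sum_congr rfl fun t ht => ?_
    rw [dicksonCoeff_succ_succ v (mem_range.mp ht)]
    ring
  rw [hmiddle, dicksonCoeff_succ_zero, dicksonCoeff_self, dicksonCoeff_self]
  ring

theorem orbitProd_eq_dicksonPoly (s : ℕ) (z : R) : orbitProd K v s z = dicksonPoly K v s z := by
  induction s generalizing z with
  | zero => simp [dicksonPoly]
  | succ s ih =>
    have hlinear (β : K) :
        orbitProd K v s (z + β • v s) = orbitProd K v s z + β • orbitProd K v s (v s) := by
      simp only [ih, dicksonPoly_add_smul]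
    rw [orbitProd_succ, prod_congr rfl fun β _ => hlinear β, FiniteField.prod_add_smul_eq,
      dicksonPoly_succ, ih, ih]

theorem sum_orbitProd_mul_orbitProd_pow_card {ι : Type*} (I : Finset ι) (w : ℕ → R)
    (a b : ℕ) (x y : ι → R) :
    ∑ m ∈ I, orbitProd K v a (x m) * orbitProd K w b (y m) ^ q
      = ∑ i ∈ range (a + 1), ∑ j ∈ range (b + 1),
          (-1) ^ (a + i + (b + j)) * dicksonCoeff K v a i * dicksonCoeff K w b j ^ q
            * ∑ m ∈ I, x m ^ q ^ i * y m ^ q ^ (j + 1) := by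
  simp only [orbitProd_eq_dicksonPoly, dicksonPoly_pow_card]
  simp only [dicksonPoly, sum_mul_sum, mul_sum (s := I)]
  conv_lhs => rw [sum_comm]
  refine sum_congr rfl fun i _ => ?_
  conv_lhs => rw [sum_comm]
  exact sum_congr rfl fun j _ => sum_congr rfl fun m _ => by ring

end OrbitProd

section VariableSequences

variable (R : Type*) [CommSemiring R]

noncomputable def xSeq (j : ℕ) : MvPolynomial (Fin n ⊕ Fin n) R :=
  if h : j < n then X (Sum.inl ⟨j, h⟩) else 0

/-- `y_n, y_{n-1}, …, y_1, 0, 0, …`: the order in which the `f*_i` adjoin the `y`-variables. -/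
noncomputable def ySeqRev (j : ℕ) : MvPolynomial (Fin n ⊕ Fin n) R :=
  if h : j < n then X (Sum.inr ⟨n - 1 - j, by omega⟩) else 0

variable {n R}

theorem xSeq_val (m : Fin n) : xSeq n R m = X (Sum.inl m) := by
  rw [xSeq, dif_pos m.isLt]

theorem ySeqRev_sub (m : Fin n) : ySeqRev n R (n - 1 - m) = X (Sum.inr m) := by
  rw [ySeqRev, dif_pos (by omega)]
  congr 3
  omega

end VariableSequences

section Invariants

variable {F n}

local notation "q" => Fintype.card F

theorem fX_eq_orbitProd {k : ℕ} (hk1 : 1 ≤ k) (hk2 : k ≤ n) :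
    fX F n k = orbitProd F (xSeq n F) (k - 1) (xSeq n F (k - 1)) := by
  rw [fX, dif_pos ⟨hk1, hk2⟩, orbitProd]
  refine prod_congr rfl fun α _ => ?_
  congr 1
  · rw [xSeq, dif_pos (by omega)]
  · refine sum_congr rfl fun j _ => ?_
    rw [xSeq, dif_pos (by omega), smul_eq_C_mul]

theorem fY_eq_orbitProd {k : ℕ} (hk1 : 1 ≤ k) (hk2 : k ≤ n) :
    fY F n k = orbitProd F (ySeqRev n F) (k - 1) (ySeqRev n F (k - 1)) := by
  rw [fY, dif_pos ⟨hk1, hk2⟩, orbitProd]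
  refine prod_congr rfl fun α _ => ?_
  congr 1
  · rw [ySeqRev, dif_pos (by omega)]
    congr 3
    omega
  · refine sum_congr rfl fun j _ => ?_
    rw [ySeqRev, dif_pos (by omega), smul_eq_C_mul]

theorem cX_eq_dicksonCoeff {s : ℕ} (t : ℕ) (hs : s ≤ n) :
    cX F n s t = dicksonCoeff F (xSeq n F) s t := by
  rw [cX, if_pos hs, dicksonCoeff, dicksonSum]
  refine sum_congr rfl fun g _ => prod_congr rfl fun l _ => ?_
  rw [fX_eq_orbitProd (by omega) (by omega), Nat.add_sub_cancel]

theorem cY_eq_dicksonCoeff {s : ℕ} (t : ℕ) (hs : s ≤ n) :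
    cY F n s t = dicksonCoeff F (ySeqRev n F) s t := by
  rw [cY, if_pos hs, dicksonCoeff, dicksonSum]
  refine sum_congr rfl fun g _ => prod_congr rfl fun l _ => ?_
  rw [fY_eq_orbitProd (by omega) (by omega), Nat.add_sub_cancel]

theorem uInv_pow_eq (i j : ℕ) :
    uInv F n ((i : ℤ) - (j : ℤ) - 1) ^ q ^ min i (j + 1)
      = ∑ m : Fin n, X (Sum.inl m) ^ q ^ i * X (Sum.inr m) ^ q ^ (j + 1) := by
  rcases Nat.lt_or_ge i (j + 1) with hij | hij
  · rw [uInv, if_neg (by omega), min_eq_left hij.le,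
      show (-((i : ℤ) - (j : ℤ) - 1)).toNat = j + 1 - i by omega,
      ← FiniteField.frobeniusAlgHom_pow_apply, map_sum]
    refine sum_congr rfl fun m _ => ?_
    rw [map_mul, map_pow, FiniteField.frobeniusAlgHom_pow_apply,
      FiniteField.frobeniusAlgHom_pow_apply, ← pow_mul, ← pow_add, Nat.add_sub_of_le hij.le]
  · rw [uInv, if_pos (by omega), min_eq_right hij,
      show ((i : ℤ) - (j : ℤ) - 1).toNat = i - (j + 1) by omega,
      ← FiniteField.frobeniusAlgHom_pow_apply, map_sum]
    refine sum_congr rfl fun m _ => ?_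
    rw [map_mul, map_pow, FiniteField.frobeniusAlgHom_pow_apply,
      FiniteField.frobeniusAlgHom_pow_apply, ← pow_mul, ← pow_add, Nat.add_sub_of_le hij]

theorem relation_Rk_minus_lhs_eq {k : ℕ} (hk1 : 1 ≤ k) (hk2 : k ≤ n) :
    ∑ i ∈ range k, ∑ j ∈ range (n - k + 1),
      (-1 : MvPolynomial (Fin n ⊕ Fin n) F) ^ (i + j + n + 1) * cX F n (k - 1) i
        * cY F n (n - k) j ^ q * uInv F n ((i : ℤ) - (j : ℤ) - 1) ^ q ^ min i (j + 1)
    = ∑ m : Fin n, orbitProd F (xSeq n F) (k - 1) (X (Sum.inl m))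
        * orbitProd F (ySeqRev n F) (n - k) (X (Sum.inr m)) ^ q := by
  rw [sum_orbitProd_mul_orbitProd_pow_card, Nat.sub_add_cancel hk1]
  refine sum_congr rfl fun i _ => sum_congr rfl fun j _ => ?_
  rw [uInv_pow_eq, cX_eq_dicksonCoeff i (by omega), cY_eq_dicksonCoeff j (by omega),
    show i + j + n + 1 = k - 1 + i + (n - k + j) + 2 by omega]
  ring

end Invariants

/-- Relation `R_k^-`. -/
theorem relation_Rk_minus (k : ℕ) (hk1 : 1 ≤ k) (hk2 : k ≤ n) :
    ∑ i ∈ Finset.range k, ∑ j ∈ Finset.range (n - k + 1),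
      (-1 : MvPolynomial (Fin n ⊕ Fin n) F) ^ (i + j + n + 1) *
        cX F n (k - 1) i * cY F n (n - k) j ^ (Fintype.card F) *
        uInv F n ((i : ℤ) - (j : ℤ) - 1) ^ (Fintype.card F ^ min i (j + 1))
    = fX F n k * fY F n (n + 1 - k) ^ (Fintype.card F) := by
  have hk : k - 1 < n := by omega
  rw [relation_Rk_minus_lhs_eq hk1 hk2, sum_eq_single ⟨k - 1, hk⟩]
  · rw [fX_eq_orbitProd hk1 hk2, fY_eq_orbitProd (by omega) (by omega),
      show n + 1 - k - 1 = n - k by omega, ← xSeq_val, ← ySeqRev_sub]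
    congr 4
    dsimp only
    omega
  · intro m _ hm
    have hm' : (m : ℕ) ≠ k - 1 := fun h => hm (Fin.ext h)
    rcases lt_or_gt_of_ne hm' with hlt | hgt
    · rw [← xSeq_val, orbitProd_apply_of_lt _ hlt, zero_mul]
    · rw [← ySeqRev_sub, orbitProd_apply_of_lt _ (by omega), zero_pow Fintype.card_ne_zero,
        mul_zero]
  · simp
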